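/- arXiv:1901.07986 — 3 statements merged into one kernel-verified Lean document; each statement's English description precedes it below -/
import Mathlib

section
/- Let R ∈ ℝ^{n × d}, t ∈ ℝ^d, and γ, δ ∈ ℝ with γ ≥ 0, δ ≥ 0 and ‖t‖₂² + δ > 0. Define f(w) = (1/2)·‖R − w tᵀ‖_F² + γ·Σ_{i} w_i + (δ/2)·‖w‖₂² for w ∈ ℝⁿ. Then the vector w* ∈ ℝⁿ with w*_i = max(0, ((R t)_i − γ) / (‖t‖₂² + δ)) satisfies w* ≥ 0 componentwise and f(w*) ≤ f(w) for every w ∈ ℝⁿ with w ≥ 0 componentwise. That is, the projected-gradient closed-form update w ← [R t − γ·1_n]₊ / (‖t‖₂² + δ) of RRI-NMF is the exact minimizer of the regularized rank-one least squares objective over the non-negative orthant. -/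
open Matrix Finset

lemma quad_min (S δ γ b x : ℝ) (hγ : 0 ≤ γ) (hS : 0 < S + δ)
    (hx : 0 ≤ x) (xs : ℝ) (hxs : xs = max 0 ((b - γ) / (S + δ))) :
    -(xs * b) + ((S + δ)/2) * xs^2 + γ * xs ≤ -(x * b) + ((S + δ)/2) * x^2 + γ * x := by
  rcases le_or_gt (b - γ) 0 with h | h
  · have hxs0 : xs = 0 := by
      rw [hxs, max_eq_left_iff]
      exact div_nonpos_of_nonpos_of_nonneg h hS.le
    rw [hxs0]
    nlinarith [sq_nonneg x, mul_nonneg hx (neg_nonneg.2 h)]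
  · set u := (b - γ) / (S + δ) with hu
    have hxs1 : xs = u := by
      rw [hxs, max_eq_right_iff]; positivity
    have hb : b = (S + δ) * u + γ := by
      rw [hu, mul_div_assoc', mul_div_cancel_left₀ _ hS.ne']; ring
    rw [hxs1, hb]
    nlinarith [mul_nonneg hS.le (sq_nonneg (x - u))]

/-- **The RRI-NMF closed-form `W`-update is the exact minimizer of the
regularized rank-one least squares objective over the non-negative orthant.**
For `f(w) = (1/2)‖R − w tᵀ‖_F² + γ ∑ᵢ wᵢ + (δ/2)‖w‖₂²`, the vector
`w*ᵢ = max(0, ((R t)ᵢ − γ)/(‖t‖₂² + δ))` is non-negative and minimizes `f`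
over all componentwise non-negative `w`. -/
theorem rri_nmf_w_update_minimizes
    (n d : ℕ) (R : Matrix (Fin n) (Fin d) ℝ) (t : Fin d → ℝ)
    (γ δ : ℝ) (hγ : 0 ≤ γ) (hδ : 0 ≤ δ)
    (hpos : 0 < (∑ j : Fin d, (t j) ^ 2) + δ)
    (f : (Fin n → ℝ) → ℝ)
    (hf : ∀ w : Fin n → ℝ,
      f w = (1 / 2) * (∑ i : Fin n, ∑ j : Fin d, (R i j - w i * t j) ^ 2)
            + γ * (∑ i : Fin n, w i)
            + (δ / 2) * (∑ i : Fin n, (w i) ^ 2))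
    (wstar : Fin n → ℝ)
    (hwstar : ∀ i : Fin n,
      wstar i = max 0 (((R *ᵥ t) i - γ) / ((∑ j : Fin d, (t j) ^ 2) + δ))) :
    (∀ i : Fin n, 0 ≤ wstar i) ∧
      ∀ w : Fin n → ℝ, (∀ i : Fin n, 0 ≤ w i) → f wstar ≤ f w := by
  set S := ∑ j : Fin d, (t j) ^ 2 with hS
  refine ⟨fun i => by rw [hwstar i]; exact le_max_left 0 _, fun w hw => ?_⟩
  have expand : ∀ v : Fin n → ℝ, f v = ∑ i : Fin n,
      ((1/2) * (∑ j : Fin d, (R i j)^2) + (-(v i * (R *ᵥ t) i)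
        + ((S + δ)/2) * (v i)^2 + γ * v i)) := by
    intro v
    have hrow : ∀ i : Fin n, ∑ j : Fin d, (R i j - v i * t j) ^ 2
        = (∑ j : Fin d, (R i j)^2) - 2 * (v i * (R *ᵥ t) i) + (v i)^2 * S := by
      intro i
      have h1 : ∀ j : Fin d, (R i j - v i * t j) ^ 2
          = (R i j)^2 - 2 * (v i * (R i j * t j)) + (v i)^2 * (t j)^2 := by
        intro j; ring
      rw [Finset.sum_congr rfl (fun j _ => h1 j)]
      simp [Finset.sum_add_distrib, Finset.sum_sub_distrib, ← Finset.mul_sum,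
        Matrix.mulVec, dotProduct, hS]
    rw [hf v, Finset.mul_sum, Finset.mul_sum, Finset.mul_sum,
      ← Finset.sum_add_distrib, ← Finset.sum_add_distrib]
    refine Finset.sum_congr rfl fun i _ => ?_
    rw [hrow i]
    ring
  rw [expand wstar, expand w]
  refine Finset.sum_le_sum fun i _ => ?_
  have := quad_min S δ γ ((R *ᵥ t) i) (w i) hγ hpos (hw i) (wstar i) (hwstar i)
  linarith
end

section
/- Let L ≥ 1 and M ≥ 1 be natural numbers and fix a secret x ∈ ZMod L. Consider the additive secret-sharing distribution on (Fin M → ZMod L): sample r : {j : Fin M // j ≠ 0} → ZMod L uniformly at random (each coordinate independent and uniform on ZMod L) and output the share vector s with s j = r j for j ≠ 0 and s 0 = x − Σ_{j ≠ 0} r j. Then for every index i ∈ Fin M, the distribution of the restricted share vector (s j)_{j ≠ i} (the pushforward of the sharing distribution under the map deleting coordinate i) is the uniform distribution on ({j : Fin M // j ≠ i} → ZMod L); in particular, it is the same for every secret x. Hence any coalition of M − 1 parties, seeing all shares except one, learns nothing about the dealer's input x. -/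
open Finset

lemma map_unif_of_bij {α β : Type*} [Fintype α] [Nonempty α] [Fintype β] [Nonempty β]
    (f : α → β) (hf : Function.Bijective f) :
    PMF.map f (PMF.uniformOfFintype α) = PMF.uniformOfFintype β := by
  ext b
  obtain ⟨a, rfl⟩ := hf.surjective b
  rw [PMF.map_apply, tsum_eq_single a]
  · simp [PMF.uniformOfFintype_apply, Fintype.card_of_bijective hf]
  · intro a' ha'
    rw [if_neg]
    exact fun h => ha' (hf.injective h.symm)

/-- **Additive secret sharing hides the secret from any coalition of `M − 1`
parties.** Sample the shares of dealer's secret `x` by picking the shares of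
parties `j ≠ 0` uniformly at random and setting party `0`'s share so that the
shares sum to `x`. Then for every index `i`, the joint distribution of all
shares except the `i`-th is uniform — in particular independent of `x`. -/
theorem additive_secret_sharing_leaks_nothing
    (L M : ℕ) (hL : 1 ≤ L) (hM : 1 ≤ M) [NeZero L] [NeZero M]
    (x : ZMod L)
    (share : ({j : Fin M // j ≠ 0} → ZMod L) → (Fin M → ZMod L))
    (hshare : ∀ (r : {j : Fin M // j ≠ 0} → ZMod L) (j : Fin M),
      share r j = if h : j = 0 then x - ∑ j' : {j : Fin M // j ≠ 0}, r j'
                  else r ⟨j, h⟩) :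
    ∀ i : Fin M,
      PMF.map (fun s : Fin M → ZMod L => fun j : {j : Fin M // j ≠ i} => s j.1)
          (PMF.map share (PMF.uniformOfFintype ({j : Fin M // j ≠ 0} → ZMod L)))
        = PMF.uniformOfFintype ({j : Fin M // j ≠ i} → ZMod L) := by
  intro i
  rw [PMF.map_comp]
  apply map_unif_of_bij
  rw [Fintype.bijective_iff_injective_and_card]
  constructor
  · intro r r' h
    have hcomp : ∀ j : {j : Fin M // j ≠ i}, share r j.1 = share r' j.1 :=
      fun j => congrFun h j
    funext j
    by_cases hji : (j : Fin M) = i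
    · have hi0 : i ≠ 0 := hji ▸ j.2
      have h0 := hcomp ⟨0, Ne.symm hi0⟩
      rw [hshare, hshare, dif_pos rfl, dif_pos rfl] at h0
      have hsum : ∑ j' : {j : Fin M // j ≠ 0}, r j' = ∑ j' : {j : Fin M // j ≠ 0}, r' j' :=
        by linear_combination -h0
      have hrest : ∀ j' : {j : Fin M // j ≠ 0}, j' ≠ j → r j' = r' j' := by
        intro j' hj'
        have hne : (j' : Fin M) ≠ i := fun hh => hj' (Subtype.ext (hh.trans hji.symm))
        have := hcomp ⟨j'.1, hne⟩
        rw [hshare, hshare, dif_neg j'.2, dif_neg j'.2] at this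
        simpa using this
      have h1 : ∑ j' ∈ univ.erase j, r j' = ∑ j' ∈ univ.erase j, r' j' :=
        Finset.sum_congr rfl fun j' hj' => hrest j' (Finset.ne_of_mem_erase hj')
      rw [← Finset.add_sum_erase _ r (mem_univ j), ← Finset.add_sum_erase _ r' (mem_univ j),
        h1] at hsum
      exact add_right_cancel hsum
    · have := hcomp ⟨j.1, hji⟩
      rw [hshare, hshare, dif_neg j.2, dif_neg j.2] at this
      simpa using this
  · have h0 : Fintype.card {j : Fin M // j ≠ 0} = M - 1 := by
      simp [Fintype.card_subtype_compl]
    have hi : Fintype.card {j : Fin M // j ≠ i} = M - 1 := by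
      simp [Fintype.card_subtype_compl]
    simp [Fintype.card_fun, h0, hi]
end

section
/- Let M, k, d ∈ ℕ, n : Fin M → ℕ, and for each m ∈ Fin M let X⁽ᵐ⁾ ∈ ℝ^{n m × d} and W⁽ᵐ⁾ ∈ ℝ^{n m × k}; let X and W be the corresponding row-concatenations and let T ∈ ℝ^{k × d}. Fix t ∈ Fin k and γ, δ ∈ ℝ. Define the global residual R_t = X − W·T + W_{:t} T_{t:} and, for each m, the local residual R_t⁽ᵐ⁾ = X⁽ᵐ⁾ − W⁽ᵐ⁾·T + W⁽ᵐ⁾_{:t} T_{t:}. Then the restriction of the centralized column update to party m's rows equals the local update computed only from party m's data: for every i ∈ Fin (n m), ([R_t T_{t:}ᵀ − γ·1]₊ / (‖T_{t:}‖₂² + δ)) ⟨m, i⟩ = ([R_t⁽ᵐ⁾ T_{t:}ᵀ − γ·1]₊ / (‖T_{t:}‖₂² + δ)) i. Hence the W-update of RRI-NMF can be performed entirely locally by each party without any communication. -/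
open Matrix Finset

/-- **The `W`-update of RRI-NMF is purely local.** With global residual
`R_t = X − WT + W_{:t} T_{t:}` and local residuals
`R_t⁽ᵐ⁾ = X⁽ᵐ⁾ − W⁽ᵐ⁾T + W⁽ᵐ⁾_{:t} T_{t:}`, the restriction of the centralized
column update `[R_t T_{t:}ᵀ − γ·1]₊ / (‖T_{t:}‖₂² + δ)` to party `m`'s rows
equals the update computed only from party `m`'s data. -/
theorem rri_nmf_w_update_is_local
    (M k d : ℕ) (n : Fin M → ℕ)
    (X : ∀ m : Fin M, Matrix (Fin (n m)) (Fin d) ℝ)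
    (W : ∀ m : Fin M, Matrix (Fin (n m)) (Fin k) ℝ)
    (Xc : Matrix ((m : Fin M) × Fin (n m)) (Fin d) ℝ)
    (Wc : Matrix ((m : Fin M) × Fin (n m)) (Fin k) ℝ)
    (hXc : ∀ (m : Fin M) (i : Fin (n m)) (j : Fin d), Xc ⟨m, i⟩ j = X m i j)
    (hWc : ∀ (m : Fin M) (i : Fin (n m)) (j : Fin k), Wc ⟨m, i⟩ j = W m i j)
    (T : Matrix (Fin k) (Fin d) ℝ) (t : Fin k) (γ δ : ℝ)
    (Rg : Matrix ((m : Fin M) × Fin (n m)) (Fin d) ℝ)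
    (hRg : Rg = Xc - Wc * T + Matrix.of (fun p j => Wc p t * T t j))
    (Rl : ∀ m : Fin M, Matrix (Fin (n m)) (Fin d) ℝ)
    (hRl : ∀ m : Fin M,
      Rl m = X m - W m * T + Matrix.of (fun i j => W m i t * T t j)) :
    ∀ (m : Fin M) (i : Fin (n m)),
      max ((Rg *ᵥ (fun j => T t j)) ⟨m, i⟩ - γ * 1) 0 /
          ((∑ j : Fin d, (T t j) ^ 2) + δ)
        =
      max ((Rl m *ᵥ (fun j => T t j)) i - γ * 1) 0 /
          ((∑ j : Fin d, (T t j) ^ 2) + δ) := by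
  intro m i
  have key : ∀ j : Fin d, Rg ⟨m, i⟩ j = Rl m i j := by
    intro j
    simp [hRg, hRl, Matrix.mul_apply, hXc, hWc]
  simp only [Matrix.mulVec, dotProduct, key]
end
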